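/- Let n ≥ 2. The function e : ℝⁿ × Mₙ⁰ → ℝ defined by e(v, u) := (n/2) λ_max(v ⊗ v − u), where λ_max denotes the largest eigenvalue of the symmetric matrix v ⊗ v − u, is convex. -/

import Mathlib

open scoped BigOperators

noncomputable section

/-- The Euclidean norm of a vector in `ℝ^m`. -/
def eNorm {m : ℕ} (v : Fin m → ℝ) : ℝ := Real.sqrt (∑ i, v i ^ 2)

/-- `Mₙ⁰`: the submodule of symmetric trace-free `n × n` real matrices. -/
def M0 (n : ℕ) : Submodule ℝ (Matrix (Fin n) (Fin n) ℝ) where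
  carrier := {A | A.IsSymm ∧ A.trace = 0}
  add_mem' := fun ha hb => ⟨ha.1.add hb.1, by rw [Matrix.trace_add, ha.2, hb.2, add_zero]⟩
  zero_mem' := ⟨Matrix.isSymm_zero, Matrix.trace_zero ..⟩
  smul_mem' := fun c _ hA => ⟨hA.1.smul c, by rw [Matrix.trace_smul, hA.2, smul_zero]⟩

/-- For `v ∈ ℝⁿ` and `u ∈ Mₙ⁰`, the matrix `v ⊗ v − u` is symmetric (hence Hermitian). -/
lemma herm_aux {n : ℕ} (v : Fin n → ℝ) (u : M0 n) :
    (Matrix.vecMulVec v v - (u : Matrix (Fin n) (Fin n) ℝ)).IsHermitian := by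
  rw [Matrix.IsHermitian, Matrix.conjTranspose_eq_transpose_of_trivial]
  have h1 : (Matrix.vecMulVec v v).IsSymm := by
    apply Matrix.IsSymm.ext
    intro i j
    simp [Matrix.vecMulVec_apply, mul_comm]
  exact h1.sub u.2.1

/-- `e(v, u) = (n/2) λ_max(v ⊗ v − u)`, where `λ_max` is the largest eigenvalue
of the symmetric matrix `v ⊗ v − u`. -/
def efun (n : ℕ) : (Fin n → ℝ) × M0 n → ℝ :=
  fun p => ((n : ℝ) / 2) * ⨆ i, (herm_aux p.1 p.2).eigenvalues i

/-! The largest eigenvalue of a symmetric matrix `A` is the maximum of `w ⬝ᵥ A *ᵥ w` over unit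
vectors `w`. For fixed `w`, `w ⬝ᵥ (v ⊗ v − u) *ᵥ w = (v ⬝ᵥ w)² − w ⬝ᵥ u *ᵥ w` is convex in `(v, u)`,
being the square of a linear form minus a linear form, and a pointwise maximum of convex functions
is convex. -/

open Matrix Set

section Rayleigh

variable {ι : Type*} [Fintype ι]

lemma OrthonormalBasis.dotProduct_eq_sum_mul (b : OrthonormalBasis ι ℝ (EuclideanSpace ℝ ι))
    (x y : ι → ℝ) : x ⬝ᵥ y = ∑ i, (⇑(b i) ⬝ᵥ x) * (⇑(b i) ⬝ᵥ y) := by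
  have h := b.sum_inner_mul_inner (WithLp.toLp 2 x) (WithLp.toLp 2 y)
  simp only [EuclideanSpace.inner_eq_star_dotProduct, star_trivial] at h
  rw [dotProduct_comm, ← h]
  simp only [dotProduct_comm y]

variable [DecidableEq ι] {A : Matrix ι ι ℝ}

lemma Matrix.IsHermitian.eigenvectorBasis_dotProduct_mulVec (hA : A.IsHermitian) (i : ι)
    (x : ι → ℝ) : ⇑(hA.eigenvectorBasis i) ⬝ᵥ (A *ᵥ x) =
      hA.eigenvalues i * (⇑(hA.eigenvectorBasis i) ⬝ᵥ x) := by
  rw [dotProduct_mulVec, ← mulVec_transpose, ← conjTranspose_eq_transpose_of_trivial, hA.eq,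
    mulVec_eigenvectorBasis, smul_dotProduct, smul_eq_mul]

lemma Matrix.IsHermitian.dotProduct_mulVec_le_iSup_eigenvalues_mul (hA : A.IsHermitian)
    (x : ι → ℝ) : x ⬝ᵥ (A *ᵥ x) ≤ (⨆ i, hA.eigenvalues i) * (x ⬝ᵥ x) := by
  set b := hA.eigenvectorBasis
  calc x ⬝ᵥ (A *ᵥ x) = ∑ i, hA.eigenvalues i * (⇑(b i) ⬝ᵥ x) ^ 2 := by
        rw [b.dotProduct_eq_sum_mul]
        simp only [hA.eigenvectorBasis_dotProduct_mulVec, b]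
        exact Finset.sum_congr rfl fun i _ => by ring
    _ ≤ ∑ i, (⨆ j, hA.eigenvalues j) * (⇑(b i) ⬝ᵥ x) ^ 2 := by
        gcongr with i
        exact le_ciSup (Set.finite_range _).bddAbove i
    _ = (⨆ i, hA.eigenvalues i) * (x ⬝ᵥ x) := by
        rw [b.dotProduct_eq_sum_mul x x, Finset.mul_sum]
        simp only [sq]

lemma Matrix.IsHermitian.exists_dotProduct_mulVec_eq_iSup_eigenvalues [Nonempty ι]
    (hA : A.IsHermitian) : ∃ w : ι → ℝ, w ⬝ᵥ w = 1 ∧ w ⬝ᵥ (A *ᵥ w) = ⨆ i, hA.eigenvalues i := by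
  obtain ⟨i, hi⟩ := Finite.exists_max hA.eigenvalues
  have hw : ⇑(hA.eigenvectorBasis i) ⬝ᵥ ⇑(hA.eigenvectorBasis i) = 1 := by
    simpa only [EuclideanSpace.inner_eq_star_dotProduct, star_trivial, if_pos] using
      orthonormal_iff_ite.mp hA.eigenvectorBasis.orthonormal i i
  refine ⟨_, hw, ?_⟩
  rw [hA.eigenvectorBasis_dotProduct_mulVec, hw, mul_one]
  exact le_antisymm (le_ciSup (Set.finite_range _).bddAbove i) (ciSup_le hi)

end Rayleigh

theorem convexOn_iSup_eigenvalues_of_convexOn_dotProduct_mulVec {ι E : Type*} [Fintype ι]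
    [DecidableEq ι] [Nonempty ι] [AddCommGroup E] [Module ℝ E] {s : Set E}
    {f : E → Matrix ι ι ℝ} (hf : ∀ p, (f p).IsHermitian)
    (hq : ∀ w, ConvexOn ℝ s fun p => w ⬝ᵥ (f p *ᵥ w)) :
    ConvexOn ℝ s fun p => ⨆ i, (hf p).eigenvalues i := by
  refine ⟨(hq 0).1, fun x hx y hy a b ha hb hab => ?_⟩
  obtain ⟨w, hw, hmax⟩ := (hf (a • x + b • y)).exists_dotProduct_mulVec_eq_iSup_eigenvalues
  have hle : ∀ p, w ⬝ᵥ (f p *ᵥ w) ≤ ⨆ i, (hf p).eigenvalues i := fun p => by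
    simpa only [hw, mul_one] using (hf p).dotProduct_mulVec_le_iSup_eigenvalues_mul w
  calc (⨆ i, (hf (a • x + b • y)).eigenvalues i) = w ⬝ᵥ (f (a • x + b • y) *ᵥ w) := hmax.symm
    _ ≤ a • (w ⬝ᵥ (f x *ᵥ w)) + b • (w ⬝ᵥ (f y *ᵥ w)) := (hq w).2 hx hy ha hb hab
    _ ≤ a • (⨆ i, (hf x).eigenvalues i) + b • (⨆ i, (hf y).eigenvalues i) := by
        gcongr <;> exact hle _

lemma dotProduct_vecMulVec_sub_mulVec {ι R : Type*} [Fintype ι] [CommRing R] (v w : ι → R)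
    (u : Matrix ι ι R) : w ⬝ᵥ ((vecMulVec v v - u) *ᵥ w) = (v ⬝ᵥ w) ^ 2 - w ⬝ᵥ (u *ᵥ w) := by
  rw [sub_mulVec, dotProduct_sub, vecMulVec_mulVec]
  simp [dotProduct_comm, sq]

lemma convexOn_dotProduct_vecMulVec_sub_mulVec {ι 𝕜 : Type*} [Fintype ι] [Field 𝕜] [LinearOrder 𝕜]
    [IsStrictOrderedRing 𝕜] (w : ι → 𝕜) :
    ConvexOn 𝕜 univ fun p : (ι → 𝕜) × Matrix ι ι 𝕜 => w ⬝ᵥ ((vecMulVec p.1 p.1 - p.2) *ᵥ w) := by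
  refine ⟨convex_univ, fun p _ q _ a b ha hb hab => ?_⟩
  simp only [dotProduct_vecMulVec_sub_mulVec, Prod.fst_add, Prod.snd_add, Prod.smul_fst,
    Prod.smul_snd, add_dotProduct, smul_dotProduct, add_mulVec, smul_mulVec, dotProduct_add,
    dotProduct_smul, smul_eq_mul]
  nlinarith [sq_nonneg (p.1 ⬝ᵥ w - q.1 ⬝ᵥ w), mul_nonneg ha hb]

theorem efun_convex (n : ℕ) (hn : 2 ≤ n) : ConvexOn ℝ Set.univ (efun n) := by
  have : Nonempty (Fin n) := ⟨⟨0, by omega⟩⟩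
  have hq : ∀ w : Fin n → ℝ, ConvexOn ℝ univ fun p : (Fin n → ℝ) × M0 n =>
      w ⬝ᵥ ((vecMulVec p.1 p.1 - (p.2 : Matrix (Fin n) (Fin n) ℝ)) *ᵥ w) := fun w =>
    (convexOn_dotProduct_vecMulVec_sub_mulVec w).comp_linearMap
      ((LinearMap.id : (Fin n → ℝ) →ₗ[ℝ] _).prodMap (M0 n).subtype)
  exact (convexOn_iSup_eigenvalues_of_convexOn_dotProduct_mulVec _ hq).smul
    (by positivity : (0 : ℝ) ≤ n / 2)

end
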